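/- Let S ⊆ Z_p be a finite set and f* : S → Z_p any function. Then there is a pReLU-network of width 2 which computes a function f : Z_p → Z_p with f(x) = f*(x) for all x ∈ S. -/
import Mathlib


open scoped Classical

noncomputable def pReLU (p : ℕ) [Fact p.Prime] (x : ℚ_[p]) : ℚ_[p] :=
  if ‖x‖ ≤ 1 then x else 0

/-- A `pReLU`-network of width `w`, input dimension `a`, output dimension `b`:
an alternating composition of affine maps (hidden dimensions `≤ w`) and
coordinatewise `pReLU` activations, starting and ending with an affine map. -/
inductive IsPReLUNet (p : ℕ) [Fact p.Prime] (w : ℕ) : (a b : ℕ) →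
    ((Fin a → ℚ_[p]) → (Fin b → ℚ_[p])) → Prop
  | affine (a b : ℕ) (A : Matrix (Fin b) (Fin a) ℚ_[p]) (c : Fin b → ℚ_[p]) :
      IsPReLUNet p w a b (fun x => A.mulVec x + c)
  | step (a b c : ℕ) (hb : b ≤ w) (f : (Fin a → ℚ_[p]) → (Fin b → ℚ_[p]))
      (A : Matrix (Fin c) (Fin b) ℚ_[p]) (d : Fin c → ℚ_[p])
      (hf : IsPReLUNet p w a b f) :
      IsPReLUNet p w a c (fun x => A.mulVec (fun i => pReLU p (f x i)) + d)

section Aux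

variable (p : ℕ) [Fact p.Prime]

lemma pReLU_of_le {x : ℚ_[p]} (h : ‖x‖ ≤ 1) : pReLU p x = x := if_pos h

lemma pReLU_of_gt {x : ℚ_[p]} (h : ¬ ‖x‖ ≤ 1) : pReLU p x = 0 := if_neg h

lemma pReLU_norm_le (x : ℚ_[p]) : ‖pReLU p x‖ ≤ 1 := by
  unfold pReLU; split
  · assumption
  · simp

lemma norm_sub_le_one {x y : ℚ_[p]} (hx : ‖x‖ ≤ 1) (hy : ‖y‖ ≤ 1) : ‖x - y‖ ≤ 1 := by
  rw [sub_eq_add_neg]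
  refine le_trans (Padic.nonarchimedean _ _) ?_
  rw [norm_neg]
  exact max_le hx hy

lemma IsPReLUNet.affine_comp {w a b c : ℕ}
    {f : (Fin a → ℚ_[p]) → (Fin b → ℚ_[p])} (hf : IsPReLUNet p w a b f)
    (A : Matrix (Fin c) (Fin b) ℚ_[p]) (d : Fin c → ℚ_[p]) :
    IsPReLUNet p w a c (fun x => A.mulVec (f x) + d) := by
  cases hf with
  | affine _ A' c' =>
      have h : (fun x : Fin a → ℚ_[p] => A.mulVec ((fun x => A'.mulVec x + c') x) + d)
           = fun x => (A * A').mulVec x + (A.mulVec c' + d) := by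
        funext x
        dsimp only
        rw [Matrix.mulVec_add, Matrix.mulVec_mulVec, add_assoc]
      rw [h]
      exact IsPReLUNet.affine _ _ _ _
  | step _ b' hb g A' d' hg =>
      have h : (fun x : Fin a → ℚ_[p] =>
            A.mulVec ((fun x => A'.mulVec (fun i => pReLU p (g x i)) + d') x) + d)
           = fun x => (A * A').mulVec (fun i => pReLU p (g x i)) + (A.mulVec d' + d) := by
        funext x
        dsimp only
        rw [Matrix.mulVec_add, Matrix.mulVec_mulVec, add_assoc]
      rw [h]
      exact IsPReLUNet.step _ _ _ hb _ _ _ hg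

lemma IsPReLUNet.comp {w b c : ℕ}
    {g : (Fin b → ℚ_[p]) → (Fin c → ℚ_[p])} (hg : IsPReLUNet p w b c g) :
    ∀ {a : ℕ} {f : (Fin a → ℚ_[p]) → (Fin b → ℚ_[p])},
      IsPReLUNet p w a b f → IsPReLUNet p w a c (fun x => g (f x)) := by
  induction hg with
  | affine _ A c' =>
      intro a f hf
      exact hf.affine_comp p A c'
  | step _ b' hb g' A d hg' ih =>
      intro a f hf
      exact IsPReLUNet.step _ _ _ hb (fun x => g' (f x)) A d (ih hf)

/-- The basic gadget. -/
noncomputable def Qgad (a c : ℚ_[p]) (k : ℕ) (y : ℚ_[p]) : ℚ_[p] :=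
  pReLU p y + pReLU p ((p : ℚ_[p]) ^ (-(k : ℤ)) * y + (c - (p : ℚ_[p]) ^ (-(k : ℤ)) * a))

lemma one_lt_p : (1 : ℝ) < p := by
  exact_mod_cast (Fact.out : p.Prime).one_lt

lemma Qgad_norm_le (a c : ℚ_[p]) (k : ℕ) (y : ℚ_[p]) : ‖Qgad p a c k y‖ ≤ 1 := by
  refine le_trans (Padic.nonarchimedean _ _) ?_
  exact max_le (pReLU_norm_le p _) (pReLU_norm_le p _)

lemma Qgad_center (a c : ℚ_[p]) (k : ℕ) (ha : ‖a‖ ≤ 1) (hc : ‖c‖ ≤ 1) :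
    Qgad p a c k a = a + c := by
  unfold Qgad
  have h : (p : ℚ_[p]) ^ (-(k : ℤ)) * a + (c - (p : ℚ_[p]) ^ (-(k : ℤ)) * a) = c := by ring
  rw [h, pReLU_of_le p ha, pReLU_of_le p hc]

lemma Qgad_far (a c : ℚ_[p]) (k : ℕ) {y : ℚ_[p]} (hy : ‖y‖ ≤ 1) (hc : ‖c‖ ≤ 1)
    (hfar : (p : ℝ) ^ (-(k : ℤ)) < ‖y - a‖) : Qgad p a c k y = y := by
  unfold Qgad
  have h : (p : ℚ_[p]) ^ (-(k : ℤ)) * y + (c - (p : ℚ_[p]) ^ (-(k : ℤ)) * a)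
      = (p : ℚ_[p]) ^ (-(k : ℤ)) * (y - a) + c := by ring
  have hp0 : (0 : ℝ) < (p : ℝ) := lt_trans one_pos (one_lt_p p)
  have hnorm : ‖(p : ℚ_[p]) ^ (-(k : ℤ)) * (y - a)‖ = (p : ℝ) ^ (k : ℤ) * ‖y - a‖ := by
    rw [norm_mul, Padic.norm_p_zpow, neg_neg]
  have h1 : (1 : ℝ) < ‖(p : ℚ_[p]) ^ (-(k : ℤ)) * (y - a)‖ := by
    rw [hnorm]
    have := mul_lt_mul_of_pos_left hfar (zpow_pos hp0 (k : ℤ))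
    calc (1 : ℝ) = (p : ℝ) ^ (k : ℤ) * (p : ℝ) ^ (-(k : ℤ)) := by
          rw [← zpow_add₀ (ne_of_gt hp0)]; simp
      _ < (p : ℝ) ^ (k : ℤ) * ‖y - a‖ := this
  have hne : ‖(p : ℚ_[p]) ^ (-(k : ℤ)) * (y - a)‖ ≠ ‖c‖ := ne_of_gt (lt_of_le_of_lt hc h1)
  have hbig : ¬ ‖(p : ℚ_[p]) ^ (-(k : ℤ)) * (y - a) + c‖ ≤ 1 := by
    rw [Padic.add_eq_max_of_ne hne]
    push_neg
    exact lt_max_of_lt_left h1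
  rw [h, pReLU_of_le p hy, pReLU_of_gt p hbig, add_zero]

/-- Realizability predicate. -/
def Nice (f : ℚ_[p] → ℚ_[p]) : Prop :=
  (∀ x : ℚ_[p], ‖x‖ ≤ 1 → ‖f x‖ ≤ 1) ∧
  ∃ F : (Fin 1 → ℚ_[p]) → (Fin 1 → ℚ_[p]),
    IsPReLUNet p 2 1 1 F ∧ ∀ x : ℚ_[p], F (fun _ => x) = fun _ => f x

lemma nice_id : Nice p (fun x => x) := by
  refine ⟨fun x hx => hx, fun x => (1 : Matrix (Fin 1) (Fin 1) ℚ_[p]).mulVec x + 0,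
    IsPReLUNet.affine _ _ _ _, ?_⟩
  intro x
  funext i
  simp [Matrix.one_mulVec]

lemma nice_comp {f g : ℚ_[p] → ℚ_[p]} (hf : Nice p f) (hg : Nice p g) :
    Nice p (fun x => g (f x)) := by
  obtain ⟨hf1, F, hF, hFe⟩ := hf
  obtain ⟨hg1, G, hG, hGe⟩ := hg
  refine ⟨fun x hx => hg1 _ (hf1 x hx), fun x => G (F x), hG.comp p hF, ?_⟩
  intro x
  show G (F (fun _ => x)) = fun _ => g (f x)
  rw [hFe x, hGe (f x)]

lemma nice_gadget (a c : ℚ_[p]) (k : ℕ) : Nice p (Qgad p a c k) := by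
  refine ⟨fun x _ => Qgad_norm_le p a c k x, ?_⟩
  set ε : ℚ_[p] := (p : ℚ_[p]) ^ (-(k : ℤ)) with hε
  refine ⟨fun x => (Matrix.of ![![(1 : ℚ_[p]), 1]]).mulVec
      (fun i => pReLU p ((fun v => (Matrix.of ![![(1 : ℚ_[p])], ![ε]]).mulVec v
        + ![0, c - ε * a]) x i)) + 0, ?_, ?_⟩
  · exact IsPReLUNet.step 1 2 1 (le_refl 2) _ _ _ (IsPReLUNet.affine _ _ _ _)
  · intro x
    funext i
    fin_cases i
    simp [Matrix.mulVec, dotProduct, Fin.sum_univ_two, Fin.sum_univ_one,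
      Qgad, hε]

lemma exists_radius (T : Finset ℚ_[p]) (a : ℚ_[p]) :
    ∃ k : ℕ, ∀ y ∈ T, y ≠ a → (p : ℝ) ^ (-(k : ℤ)) < ‖y - a‖ := by
  classical
  have hp0 : (0 : ℝ) < (p : ℝ) := lt_trans one_pos (one_lt_p p)
  induction T using Finset.induction with
  | empty => exact ⟨0, by simp⟩
  | @insert x T hx ih =>
    obtain ⟨k0, hk0⟩ := ih
    by_cases hxa : x = a
    · refine ⟨k0, ?_⟩
      intro y hy hya
      rcases Finset.mem_insert.mp hy with h | h
      · exact absurd (h.trans hxa) hya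
      · exact hk0 y h hya
    · have hpos : (0 : ℝ) < ‖x - a‖ := by
        rw [norm_pos_iff]
        exact sub_ne_zero.mpr hxa
      obtain ⟨k1, hk1⟩ := exists_pow_lt_of_lt_one hpos
        (by rw [inv_lt_one_iff₀]; right; exact one_lt_p p : (p : ℝ)⁻¹ < 1)
      refine ⟨max k0 k1, ?_⟩
      have hmono : ∀ m m' : ℕ, m ≤ m' → (p : ℝ) ^ (-(m' : ℤ)) ≤ (p : ℝ) ^ (-(m : ℤ)) := by
        intro m m' h
        exact zpow_le_zpow_right₀ (le_of_lt (one_lt_p p)) (neg_le_neg (by exact_mod_cast h))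
      intro y hy hya
      rcases Finset.mem_insert.mp hy with h | h
      · subst h
        calc (p : ℝ) ^ (-((max k0 k1 : ℕ) : ℤ)) ≤ (p : ℝ) ^ (-(k1 : ℤ)) :=
              hmono k1 _ (le_max_right _ _)
          _ = ((p : ℝ)⁻¹) ^ k1 := by rw [zpow_neg, zpow_natCast, inv_pow]
          _ < ‖y - a‖ := hk1
      · exact lt_of_le_of_lt (hmono k0 _ (le_max_left _ _)) (hk0 y h hya)

lemma exists_fresh (T : Finset ℚ_[p]) : ∃ t : ℚ_[p], ‖t‖ ≤ 1 ∧ t ∉ T := by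
  have hinf : {x : ℚ_[p] | ‖x‖ ≤ 1}.Infinite := by
    refine Set.infinite_of_injective_forall_mem (f := (Nat.cast : ℕ → ℚ_[p]))
      Nat.cast_injective ?_
    intro n
    have := Padic.norm_int_le_one (p := p) (n : ℤ)
    simpa using this
  obtain ⟨t, ht, htT⟩ := hinf.exists_notMem_finset T
  exact ⟨t, ht, htT⟩

lemma main_interp : ∀ (n : ℕ) (v b : Fin n → ℚ_[p]),
    (∀ i, ‖v i‖ ≤ 1) → (∀ i, ‖b i‖ ≤ 1) → Function.Injective v →
    ∀ W : Finset ℚ_[p], (∀ w ∈ W, ‖w‖ ≤ 1) → (∀ i, v i ∉ W) →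
    ∃ f : ℚ_[p] → ℚ_[p], Nice p f ∧ (∀ i, f (v i) = b i) ∧ ∀ w ∈ W, f w = w := by
  intro n
  induction n with
  | zero =>
    intro v b _ _ _ W _ _
    exact ⟨fun x => x, nice_id p, fun i => i.elim0, fun w _ => rfl⟩
  | succ n ih =>
    intro v b hv hb hinj W hW hvW
    set a := v (Fin.last n) with ha_def
    set β := b (Fin.last n) with hβ_def
    obtain ⟨t, ht1, htbad⟩ := exists_fresh p
      ((Finset.univ.image v) ∪ (Finset.univ.image b) ∪ W)
    have htv : ∀ i, t ≠ v i := by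
      intro i h
      exact htbad (by
        apply Finset.mem_union_left
        apply Finset.mem_union_left
        exact Finset.mem_image.mpr ⟨i, Finset.mem_univ i, h.symm⟩)
    have htb : ∀ i, t ≠ b i := by
      intro i h
      exact htbad (by
        apply Finset.mem_union_left
        apply Finset.mem_union_right
        exact Finset.mem_image.mpr ⟨i, Finset.mem_univ i, h.symm⟩)
    have htW : t ∉ W := fun h => htbad (Finset.mem_union_right _ h)
    -- first gadget
    obtain ⟨k1, hk1⟩ := exists_radius p ((Finset.univ.image v) ∪ W) a
    have hta1 : ‖t - a‖ ≤ 1 := norm_sub_le_one p ht1 (hv _)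
    have hG1a : Qgad p a (t - a) k1 a = t := by
      rw [Qgad_center p a (t - a) k1 (hv _) hta1, add_sub_cancel]
    have hG1vi : ∀ i : Fin n, Qgad p a (t - a) k1 (v i.castSucc) = v i.castSucc := by
      intro i
      refine Qgad_far p a (t - a) k1 (hv _) hta1 ?_
      refine hk1 _ ?_ (hinj.ne (Fin.ne_of_lt (Fin.castSucc_lt_last i)))
      exact Finset.mem_union_left _ (Finset.mem_image.mpr ⟨_, Finset.mem_univ _, rfl⟩)
    have hG1w : ∀ w ∈ W, Qgad p a (t - a) k1 w = w := by
      intro w hw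
      refine Qgad_far p a (t - a) k1 (hW w hw) hta1 ?_
      refine hk1 _ (Finset.mem_union_right _ hw) ?_
      intro h
      rw [h] at hw
      exact hvW (Fin.last n) hw
    -- middle
    obtain ⟨g, hgN, hgv, hgW⟩ := ih (fun i => v i.castSucc) (fun i => b i.castSucc)
      (fun i => hv _) (fun i => hb _)
      (hinj.comp (Fin.castSucc_injective n))
      (insert t W)
      (by
        intro w hw
        rcases Finset.mem_insert.mp hw with h | h
        · exact h ▸ ht1
        · exact hW w h)
      (by
        intro i hmem
        rcases Finset.mem_insert.mp hmem with h | h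
        · exact htv i.castSucc h.symm
        · exact hvW i.castSucc h)
    have hgt : g t = t := hgW t (Finset.mem_insert_self t W)
    have hgw : ∀ w ∈ W, g w = w := fun w hw => hgW w (Finset.mem_insert_of_mem hw)
    -- second gadget
    obtain ⟨k2, hk2⟩ := exists_radius p ((Finset.univ.image b) ∪ W) t
    have hβt1 : ‖β - t‖ ≤ 1 := norm_sub_le_one p (hb _) ht1
    have hG2t : Qgad p t (β - t) k2 t = β := by
      rw [Qgad_center p t (β - t) k2 ht1 hβt1, add_sub_cancel]
    have hG2b : ∀ i : Fin n, Qgad p t (β - t) k2 (b i.castSucc) = b i.castSucc := by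
      intro i
      refine Qgad_far p t (β - t) k2 (hb _) hβt1 ?_
      refine hk2 _ ?_ (fun h => htb i.castSucc h.symm)
      exact Finset.mem_union_left _ (Finset.mem_image.mpr ⟨_, Finset.mem_univ _, rfl⟩)
    have hG2w : ∀ w ∈ W, Qgad p t (β - t) k2 w = w := by
      intro w hw
      refine Qgad_far p t (β - t) k2 (hW w hw) hβt1 ?_
      exact hk2 _ (Finset.mem_union_right _ hw) (fun h => htW (h ▸ hw))
    refine ⟨fun x => Qgad p t (β - t) k2 (g (Qgad p a (t - a) k1 x)), ?_, ?_, ?_⟩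
    · exact nice_comp p (nice_comp p (nice_gadget p a (t - a) k1) hgN)
        (nice_gadget p t (β - t) k2)
    · intro i
      refine Fin.lastCases ?_ ?_ i
      · show Qgad p t (β - t) k2 (g (Qgad p a (t - a) k1 a)) = b (Fin.last n)
        rw [hG1a, hgt, hG2t]
      · intro j
        show Qgad p t (β - t) k2 (g (Qgad p a (t - a) k1 (v j.castSucc))) = b j.castSucc
        rw [hG1vi j, hgv j, hG2b j]
    · intro w hw
      show Qgad p t (β - t) k2 (g (Qgad p a (t - a) k1 w)) = w
      rw [hG1w w hw, hgw w hw, hG2w w hw]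

end Aux

theorem interpolate_finite (p : ℕ) [Fact p.Prime]
    (S : Finset ℤ_[p]) (fstar : {x // x ∈ S} → ℤ_[p]) :
    ∃ (f : ℤ_[p] → ℤ_[p]) (F : (Fin 1 → ℚ_[p]) → (Fin 1 → ℚ_[p])),
      IsPReLUNet p 2 1 1 F ∧
      (∀ x : ℤ_[p], F (fun _ => (x : ℚ_[p])) = fun _ => (f x : ℚ_[p])) ∧
      ∀ x : {x // x ∈ S}, f x = fstar x := by
  classical
  set e := S.equivFin with he
  set n := S.card
  set v : Fin n → ℚ_[p] := fun i => ((e.symm i : ℤ_[p]) : ℚ_[p]) with hv_def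
  set b : Fin n → ℚ_[p] := fun i => ((fstar (e.symm i) : ℤ_[p]) : ℚ_[p]) with hb_def
  have hv : ∀ i, ‖v i‖ ≤ 1 := fun i => (e.symm i : ℤ_[p]).2
  have hb : ∀ i, ‖b i‖ ≤ 1 := fun i => (fstar (e.symm i)).2
  have hinj : Function.Injective v := by
    intro i j h
    have : (e.symm i : ℤ_[p]) = (e.symm j : ℤ_[p]) := Subtype.ext h
    have := Subtype.ext this
    exact e.symm.injective this
  obtain ⟨fq, hN, hfv, -⟩ := main_interp p n v b hv hb hinj ∅ (by simp) (by simp)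
  obtain ⟨hnorm, F, hF, hFe⟩ := hN
  refine ⟨fun x => ⟨fq x, hnorm x x.2⟩, F, hF, ?_, ?_⟩
  · intro x
    exact hFe (x : ℚ_[p])
  · intro x
    apply Subtype.ext
    have h1 : fq (v (e x)) = b (e x) := hfv (e x)
    have h2 : v (e x) = (x : ℤ_[p]) := by
      rw [hv_def]
      simp
    have h3 : b (e x) = (fstar x : ℚ_[p]) := by
      rw [hb_def]
      simp
    show fq (x : ℚ_[p]) = (fstar x : ℚ_[p])
    rw [← h2, h1, h3]
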